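/- arXiv:1001.1400 — 4 statements merged into one kernel-verified Lean document; each statement's English description precedes it below -/
import Mathlib

section
/- Let b₀ > 0 and k ∈ ℕ, and define ψ_k : ℝ → ℝ by ψ_k(x) = e^{b₀x²/2} · (dᵏ/dxᵏ)(e^{−b₀x²}). Then ∫_{ℝ} x⁴·ψ_k(x)² dx = (3(2k²+2k+1)/(4b₀²)) · ∫_{ℝ} ψ_k(x)² dx. -/
/-!
Put `c = √(2b₀)`. Since `dⁿ/duⁿ e^{-u²/2} = (-1)ⁿ Hₙ(u) e^{-u²/2}` for the probabilists' Hermite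
polynomials, `ψ_k(x)² = c^{2k} H_k(cx)² e^{-(cx)²/2}`, and the substitution `u = cx` turns both
integrals into values of the functional `P ↦ ∫ P(u) e^{-u²/2} du` on integer polynomials.
Integration by parts gives `∫ X P = ∫ P'`, i.e. `d/du` is adjoint to the raising operator
`P ↦ X P - P'`, which maps `Hₙ` to `Hₙ₊₁`. Hence `⟨P, Hₙ⟩ = ∫ P⁽ⁿ⁾` (orthogonality),
`‖Hₙ₊₁‖² = (n+1)‖Hₙ‖²` and `‖H_k''‖² = k(k-1)‖H_k‖²`. Finally
`X² H_k = H_{k+2} + (2k+1) H_k + H_k''` is an orthogonal sum, so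
`∫ X⁴ H_k² = ‖X² H_k‖² = ((k+2)(k+1) + (2k+1)² + k(k-1)) ‖H_k‖² = 3(2k²+2k+1) ‖H_k‖²`.
-/

open MeasureTheory Polynomial

theorem integrable_aeval_mul_exp_neg_mul_sq {R : Type*} [CommSemiring R] [Algebra R ℝ]
    {b : ℝ} (hb : 0 < b) (P : R[X]) :
    Integrable fun x : ℝ => aeval x P * Real.exp (-b * x ^ 2) := by
  induction P using Polynomial.induction_on' with
  | add p q hp hq => simpa only [map_add, add_mul] using hp.fun_add hq
  | monomial n a =>
    have h := (integrable_rpow_mul_exp_neg_mul_sq hb (s := n)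
      (neg_one_lt_zero.trans_le n.cast_nonneg)).const_mul (algebraMap R ℝ a)
    simpa only [aeval_monomial, Real.rpow_natCast, mul_assoc] using h

theorem integrable_aeval_mul_gaussian (P : ℤ[X]) :
    Integrable fun x : ℝ => aeval x P * Real.exp (-(x ^ 2 / 2)) := by
  simpa only [neg_mul, one_div, ← div_eq_inv_mul] using
    integrable_aeval_mul_exp_neg_mul_sq one_half_pos P

noncomputable def gaussianIntegral : ℤ[X] →+ ℝ where
  toFun P := ∫ x : ℝ, aeval x P * Real.exp (-(x ^ 2 / 2))
  map_zero' := by simp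
  map_add' P Q := by
    simp only [map_add, add_mul]
    exact integral_add (integrable_aeval_mul_gaussian P) (integrable_aeval_mul_gaussian Q)

theorem gaussianIntegral_apply (P : ℤ[X]) :
    gaussianIntegral P = ∫ x : ℝ, aeval x P * Real.exp (-(x ^ 2 / 2)) := rfl

theorem gaussianIntegral_C_mul (a : ℤ) (P : ℤ[X]) :
    gaussianIntegral (C a * P) = a * gaussianIntegral P := by
  rw [C_mul', map_zsmul, zsmul_eq_mul]

theorem gaussianIntegral_X_mul (P : ℤ[X]) :
    gaussianIntegral (X * P) = gaussianIntegral (derivative P) := by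
  have hderiv : ∀ x : ℝ, HasDerivAt (fun x => aeval x P * Real.exp (-(x ^ 2 / 2)))
      (aeval x (derivative P - X * P) * Real.exp (-(x ^ 2 / 2))) x := by
    intro x
    have hexp : HasDerivAt (fun x : ℝ => Real.exp (-(x ^ 2 / 2)))
        (Real.exp (-(x ^ 2 / 2)) * -x) x := by
      simpa using (((hasDerivAt_pow 2 x).div_const 2).neg).exp
    refine ((P.hasDerivAt_aeval x).mul hexp).congr_deriv ?_
    rw [map_sub, map_mul, aeval_X]
    ring
  have h := integral_eq_zero_of_hasDerivAt_of_integrable hderiv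
    (integrable_aeval_mul_gaussian _) (integrable_aeval_mul_gaussian P)
  rw [← gaussianIntegral_apply, map_sub, sub_eq_zero] at h
  exact h.symm

theorem gaussianIntegral_derivative_mul (P Q : ℤ[X]) :
    gaussianIntegral (derivative P * Q) = gaussianIntegral (P * (X * Q - derivative Q)) := by
  have h := gaussianIntegral_X_mul (P * Q)
  rw [derivative_mul, map_add] at h
  rw [mul_sub, map_sub, mul_left_comm, h]
  ring

theorem gaussianIntegral_mul_hermite (P : ℤ[X]) (n : ℕ) :
    gaussianIntegral (P * hermite n) = gaussianIntegral (derivative^[n] P) := by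
  induction n generalizing P with
  | zero => simp
  | succ n ih =>
    rw [hermite_succ, ← gaussianIntegral_derivative_mul, ih, Function.iterate_succ_apply]

theorem gaussianIntegral_iterate_derivative_hermite_mul_hermite {j k n : ℕ} (h : k < j + n) :
    gaussianIntegral (derivative^[j] (hermite k) * hermite n) = 0 := by
  rw [gaussianIntegral_mul_hermite, ← Function.iterate_add_apply,
    iterate_derivative_eq_zero (natDegree_hermite.trans_lt (by omega)), map_zero]

theorem derivative_hermite_succ (n : ℕ) :
    derivative (hermite (n + 1)) = C ((n : ℤ) + 1) * hermite n := by
  induction n with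
  | zero => simp
  | succ n ih =>
    rw [hermite_succ (n + 1), derivative_sub, derivative_mul, derivative_X, ih, derivative_mul,
      derivative_C, zero_mul, zero_add, hermite_succ n]
    push_cast
    simp only [map_add, map_one]
    ring

/-- The Hermite equation `X Hₙ' - Hₙ'' = n Hₙ`, differentiated `j` times. -/
theorem X_mul_iterate_derivative_hermite (n j : ℕ) :
    X * derivative^[j + 1] (hermite n) - derivative^[j + 2] (hermite n) =
      C ((n : ℤ) - j) * derivative^[j] (hermite n) := by
  induction j with
  | zero =>
    have h := derivative_hermite_succ n
    rw [hermite_succ, derivative_sub, derivative_mul, derivative_X] at h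
    simp only [Function.iterate_succ_apply', Function.iterate_zero_apply, CharP.cast_eq_zero,
      sub_zero]
    simp only [map_add, map_one] at h
    linear_combination h
  | succ j ih =>
    have h := congrArg derivative ih
    simp only [derivative_sub, derivative_mul, derivative_X, derivative_C, zero_mul, zero_add,
      ← Function.iterate_succ_apply' derivative] at h
    push_cast
    simp only [map_sub, map_add, map_one] at h ⊢
    linear_combination h

theorem X_sq_mul_hermite (k : ℕ) :
    X ^ 2 * hermite k = hermite (k + 2) + C (2 * (k : ℤ) + 1) * hermite k +
      derivative^[2] (hermite k) := by
  have h := X_mul_iterate_derivative_hermite k 0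
  simp only [Function.iterate_succ_apply', Function.iterate_zero_apply, CharP.cast_eq_zero,
    sub_zero] at h ⊢
  rw [hermite_succ (k + 1), hermite_succ k, derivative_sub, derivative_mul, derivative_X]
  simp only [map_add, map_mul, map_ofNat, map_one]
  linear_combination (2 : ℤ[X]) * h

theorem gaussianIntegral_hermite_succ_mul_self (n : ℕ) :
    gaussianIntegral (hermite (n + 1) * hermite (n + 1)) =
      (n + 1) * gaussianIntegral (hermite n * hermite n) := by
  calc gaussianIntegral (hermite (n + 1) * hermite (n + 1))
      = gaussianIntegral (hermite (n + 1) * (X * hermite n - derivative (hermite n))) := by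
        rw [← hermite_succ]
    _ = gaussianIntegral (derivative (hermite (n + 1)) * hermite n) :=
        (gaussianIntegral_derivative_mul _ _).symm
    _ = (n + 1) * gaussianIntegral (hermite n * hermite n) := by
        rw [derivative_hermite_succ, mul_assoc, gaussianIntegral_C_mul]
        push_cast
        rfl

theorem gaussianIntegral_iterate_derivative_hermite_succ_mul_self (n j : ℕ) :
    gaussianIntegral (derivative^[j + 1] (hermite n) * derivative^[j + 1] (hermite n)) =
      (n - j) * gaussianIntegral (derivative^[j] (hermite n) * derivative^[j] (hermite n)) := by
  rw [Function.iterate_succ_apply' derivative j, gaussianIntegral_derivative_mul,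
    ← Function.iterate_succ_apply' derivative, ← Function.iterate_succ_apply' derivative,
    X_mul_iterate_derivative_hermite, mul_left_comm, gaussianIntegral_C_mul]
  push_cast
  rfl

theorem gaussianIntegral_X_pow_four_mul_hermite_mul_self (k : ℕ) :
    gaussianIntegral (X ^ 4 * (hermite k * hermite k)) =
      3 * (2 * (k : ℝ) ^ 2 + 2 * k + 1) * gaussianIntegral (hermite k * hermite k) := by
  set H := hermite k
  set H₂ := hermite (k + 2)
  set D₂ := derivative^[2] H
  have hexpand : X ^ 4 * (H * H) = H₂ * H₂ + C ((2 * (k : ℤ) + 1) ^ 2) * (H * H) + D₂ * D₂ +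
      C (2 * (2 * (k : ℤ) + 1)) * (H * H₂) + C 2 * (D₂ * H₂) + C (2 * (2 * (k : ℤ) + 1)) * (D₂ * H) := by
    calc X ^ 4 * (H * H) = (X ^ 2 * H) * (X ^ 2 * H) := by ring
      _ = _ := by
        rw [X_sq_mul_hermite]
        simp only [map_mul, map_pow, map_ofNat]
        ring
  have hH₂ : gaussianIntegral (H₂ * H₂) = (k + 2) * (k + 1) * gaussianIntegral (H * H) := by
    rw [gaussianIntegral_hermite_succ_mul_self, gaussianIntegral_hermite_succ_mul_self]
    push_cast
    ring
  have hD₂ : gaussianIntegral (D₂ * D₂) = (k - 1) * k * gaussianIntegral (H * H) := by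
    rw [gaussianIntegral_iterate_derivative_hermite_succ_mul_self,
      gaussianIntegral_iterate_derivative_hermite_succ_mul_self, Function.iterate_zero_apply]
    push_cast
    ring
  have hHH₂ : gaussianIntegral (H * H₂) = 0 :=
    gaussianIntegral_iterate_derivative_hermite_mul_hermite (j := 0) (by omega)
  have hD₂H₂ : gaussianIntegral (D₂ * H₂) = 0 :=
    gaussianIntegral_iterate_derivative_hermite_mul_hermite (by omega)
  have hD₂H : gaussianIntegral (D₂ * H) = 0 :=
    gaussianIntegral_iterate_derivative_hermite_mul_hermite (by omega)
  rw [hexpand]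
  simp only [map_add, gaussianIntegral_C_mul, hH₂, hD₂, hHH₂, hD₂H₂, hD₂H]
  push_cast
  ring

theorem iteratedDeriv_gaussian_comp_mul (c : ℝ) (n : ℕ) (x : ℝ) :
    iteratedDeriv n (fun y => Real.exp (-((c * y) ^ 2 / 2))) x =
      (-c) ^ n * aeval (c * x) (hermite n) * Real.exp (-((c * x) ^ 2 / 2)) := by
  have hsmooth : ContDiff ℝ n fun y : ℝ => Real.exp (-(y ^ 2 / 2)) := by fun_prop
  simp only [iteratedDeriv_comp_const_mul hsmooth c, iteratedDeriv_eq_iterate,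
    deriv_gaussian_eq_hermite_mul_gaussian, neg_pow c]
  ring

theorem integral_aeval_mul_gaussian_comp_mul (c : ℝ) (P : ℤ[X]) :
    ∫ x : ℝ, aeval (c * x) P * Real.exp (-((c * x) ^ 2 / 2)) = |c⁻¹| * gaussianIntegral P :=
  Measure.integral_comp_mul_left (fun u => aeval u P * Real.exp (-(u ^ 2 / 2))) c

/-- Fourth-moment identity for Hermite eigenfunctions:
`∫ x⁴ ψ_k² = (3(2k²+2k+1)/(4b₀²)) ∫ ψ_k²`. -/
theorem hermite_fourth_moment (b₀ : ℝ) (hb₀ : 0 < b₀) (k : ℕ) (ψ : ℝ → ℝ)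
    (hψ : ∀ x, ψ x =
      Real.exp (b₀ * x ^ 2 / 2) * iteratedDeriv k (fun y => Real.exp (-b₀ * y ^ 2)) x) :
    ∫ x : ℝ, x ^ 4 * ψ x ^ 2 =
      (3 * (2 * (k : ℝ) ^ 2 + 2 * (k : ℝ) + 1) / (4 * b₀ ^ 2)) * ∫ x : ℝ, ψ x ^ 2 := by
  set c := √(2 * b₀)
  have hc : 0 < c := Real.sqrt_pos.2 (by positivity)
  have hc2 : c ^ 2 = 2 * b₀ := Real.sq_sqrt (by positivity)
  set H := hermite k
  have hψsq : ∀ x, ψ x ^ 2 =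
      c ^ (2 * k) * (aeval (c * x) (H * H) * Real.exp (-((c * x) ^ 2 / 2))) := by
    intro x
    have hgauss : (fun y => Real.exp (-b₀ * y ^ 2)) = fun y => Real.exp (-((c * y) ^ 2 / 2)) := by
      funext y
      rw [mul_pow, hc2]
      ring_nf
    have hexp : Real.exp (b₀ * x ^ 2 / 2) ^ 2 * Real.exp (-((c * x) ^ 2 / 2)) ^ 2 =
        Real.exp (-((c * x) ^ 2 / 2)) := by
      rw [← mul_pow, ← Real.exp_add, ← Real.exp_nat_mul, mul_pow, hc2]
      ring_nf
    have hsign : ((-c) ^ k) ^ 2 = c ^ (2 * k) := by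
      rw [← pow_mul, mul_comm, Even.neg_pow (even_two_mul k)]
    rw [hψ, hgauss, iteratedDeriv_gaussian_comp_mul, map_mul]
    linear_combination (c ^ (2 * k) * aeval (c * x) H ^ 2) * hexp +
      (aeval (c * x) H * Real.exp (b₀ * x ^ 2 / 2) * Real.exp (-((c * x) ^ 2 / 2))) ^ 2 * hsign
  have hmoment : ∀ x, x ^ 4 * ψ x ^ 2 = c ^ (2 * k) / c ^ 4 *
      (aeval (c * x) (X ^ 4 * (H * H)) * Real.exp (-((c * x) ^ 2 / 2))) := by
    intro x
    rw [hψsq]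
    simp only [map_mul, map_pow, aeval_X]
    field_simp
  have hc4 : c ^ 4 = 4 * b₀ ^ 2 := by rw [show c ^ 4 = (c ^ 2) ^ 2 by ring, hc2]; ring
  calc ∫ x : ℝ, x ^ 4 * ψ x ^ 2
      = c ^ (2 * k) / c ^ 4 * (|c⁻¹| * gaussianIntegral (X ^ 4 * (H * H))) := by
        simp_rw [hmoment]
        rw [integral_const_mul, integral_aeval_mul_gaussian_comp_mul]
    _ = 3 * (2 * (k : ℝ) ^ 2 + 2 * k + 1) / (4 * b₀ ^ 2) *
          (c ^ (2 * k) * (|c⁻¹| * gaussianIntegral (H * H))) := by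
        rw [gaussianIntegral_X_pow_four_mul_hermite_mul_self, hc4]
        ring
    _ = _ := by
        simp_rw [hψsq]
        rw [integral_const_mul, integral_aeval_mul_gaussian_comp_mul]
end

section
/- Let b₀ > 0 and k ∈ ℕ, and define ψ_k : ℝ → ℝ by ψ_k(x) = e^{b₀x²/2} · (dᵏ/dxᵏ)(e^{−b₀x²}). Then ∫_{ℝ} x²·ψ_k''(x)·ψ_k(x) dx = −((2k²+2k−1)/4) · ∫_{ℝ} ψ_k(x)² dx. -/
/-!
`ψ_k` is a polynomial times `e^{-b₀x²/2}` and solves the harmonic oscillator equation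
`ψ'' = (b₀²x² - (2k+1)b₀) ψ`. If `ψ'' = Vψ` and `ψ` decays like a Gaussian, then for every
polynomial `w` the function `wψ'² - (wV - w''/2)ψ² - w'ψψ'`, whose derivative is
`(w'''/2 - 2w'V - wV')ψ²`, vanishes at `±∞`, so `∫ (w'''/2 - 2w'V - wV')ψ² = 0` (a virial
identity). For `V = b²x² - Eb` the choice `w = x³ - (E/2b)x` turns this integrand into
`-8x²Vψ² + (3 - E²)ψ²`, which gives `∫ x²ψ''ψ = (3 - E²)/8 ∫ ψ²`; here `E = 2k + 1`.
-/

open MeasureTheory Polynomial Real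

theorem integrable_eval_mul_exp_neg_mul_sq {b : ℝ} (hb : 0 < b) (P : ℝ[X]) :
    Integrable fun x : ℝ => P.eval x * rexp (-b * x ^ 2) := by
  simp_rw [eval_eq_sum_range, Finset.sum_mul]
  refine integrable_finsetSum _ fun i _ => ?_
  have hi := integrable_rpow_mul_exp_neg_mul_sq hb (s := i) (by linarith [i.cast_nonneg (α := ℝ)])
  simpa [Real.rpow_natCast, mul_assoc] using hi.const_mul (P.coeff i)

theorem hasDerivAt_eval_mul_exp_neg_mul_sq (b : ℝ) (P : ℝ[X]) (x : ℝ) :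
    HasDerivAt (fun y => P.eval y * rexp (-b * y ^ 2))
      ((derivative P - C (2 * b) * X * P).eval x * rexp (-b * x ^ 2)) x := by
  have hexp : HasDerivAt (fun y => rexp (-b * y ^ 2)) (-b * (2 * x) * rexp (-b * x ^ 2)) x := by
    simpa [mul_comm] using ((hasDerivAt_pow 2 x).const_mul (-b)).exp
  refine ((P.hasDerivAt x).mul hexp).congr_deriv ?_
  simp only [eval_sub, eval_mul, eval_C, eval_X]
  ring

theorem integrable_eval_mul_mul_of_eq_eval_mul_exp {c : ℝ} (hc : 0 < c) {f g : ℝ → ℝ}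
    {P Q : ℝ[X]} (hf : ∀ x, f x = P.eval x * rexp (-c * x ^ 2))
    (hg : ∀ x, g x = Q.eval x * rexp (-c * x ^ 2)) (p : ℝ[X]) :
    Integrable fun x => p.eval x * (f x * g x) := by
  convert integrable_eval_mul_exp_neg_mul_sq (by positivity : 0 < 2 * c) (p * P * Q) using 2 with x
  rw [hf, hg, show -(2 * c) * x ^ 2 = -c * x ^ 2 + -c * x ^ 2 by ring, Real.exp_add]
  simp only [eval_mul]
  ring

/-- For `b > 0`, `scaledHermite b k = (-1)ᵏ (2b)^(k/2) Heₖ(√(2b) X)`, with `Heₖ` the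
probabilists' Hermite polynomial. -/
noncomputable def scaledHermite (b : ℝ) : ℕ → ℝ[X]
  | 0 => 1
  | k + 1 => derivative (scaledHermite b k) - C (2 * b) * X * scaledHermite b k

theorem iteratedDeriv_exp_neg_mul_sq (b : ℝ) (k : ℕ) :
    iteratedDeriv k (fun y => rexp (-b * y ^ 2)) =
      fun x => (scaledHermite b k).eval x * rexp (-b * x ^ 2) := by
  induction k with
  | zero => simp [scaledHermite]
  | succ k ih =>
    funext x
    rw [iteratedDeriv_succ, ih, (hasDerivAt_eval_mul_exp_neg_mul_sq b _ x).deriv, scaledHermite]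

theorem derivative_derivative_scaledHermite (b : ℝ) (k : ℕ) :
    derivative (derivative (scaledHermite b k)) =
      C (2 * b) * X * derivative (scaledHermite b k) - C (2 * b * k) * scaledHermite b k := by
  induction k with
  | zero => simp [scaledHermite]
  | succ k ih =>
    have ih' := congrArg derivative ih
    simp only [derivative_sub, derivative_mul, derivative_C, derivative_X, zero_mul, mul_one,
      zero_add] at ih'
    simp only [scaledHermite, derivative_sub, derivative_mul, derivative_C, derivative_X,
      zero_mul, zero_add, mul_one, Nat.cast_succ, mul_add, map_add]
    linear_combination ih' - C (2 * b) * X * ih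

noncomputable def hermiteFunction (b : ℝ) (k : ℕ) (x : ℝ) : ℝ :=
  (scaledHermite b k).eval x * rexp (-(b / 2) * x ^ 2)

theorem exp_mul_iteratedDeriv_exp_neg_mul_sq (b : ℝ) (k : ℕ) (x : ℝ) :
    rexp (b * x ^ 2 / 2) * iteratedDeriv k (fun y => rexp (-b * y ^ 2)) x =
      hermiteFunction b k x := by
  rw [iteratedDeriv_exp_neg_mul_sq, hermiteFunction, mul_left_comm, ← Real.exp_add]
  ring_nf

theorem exists_hasDerivAt_hermiteFunction (b : ℝ) (k : ℕ) :
    ∃ ψ' : ℝ → ℝ, (∀ x, HasDerivAt (hermiteFunction b k) (ψ' x) x) ∧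
      ∀ x, HasDerivAt ψ' ((b ^ 2 * x ^ 2 - (2 * k + 1) * b) * hermiteFunction b k x) x := by
  set P := scaledHermite b k
  refine ⟨_, hasDerivAt_eval_mul_exp_neg_mul_sq (b / 2) P, fun x => ?_⟩
  refine (hasDerivAt_eval_mul_exp_neg_mul_sq (b / 2) _ x).congr_deriv ?_
  have hode := congrArg (eval x) (derivative_derivative_scaledHermite b k)
  simp only [hermiteFunction, derivative_sub, derivative_mul, derivative_C, derivative_X, eval_sub,
    eval_mul, eval_add, eval_C, eval_X, zero_mul, zero_add, mul_one] at hode ⊢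
  linear_combination rexp (-(b / 2) * x ^ 2) * hode

section GaussianDecay

variable {c : ℝ} {ψ ψ' : ℝ → ℝ} {Q : ℝ[X]}

theorem integral_virial (hc : 0 < c) (hψ : ∀ x, ψ x = Q.eval x * rexp (-c * x ^ 2))
    (hψ' : ∀ x, HasDerivAt ψ (ψ' x) x) (V : ℝ[X]) (hψ'' : ∀ x, HasDerivAt ψ' (V.eval x * ψ x) x)
    (w : ℝ[X]) :
    ∫ x, (C (1 / 2) * derivative^[3] w - 2 * derivative w * V - w * derivative V).eval x *
      (ψ x * ψ x) = 0 := by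
  have hψ'_eq : ∀ x, ψ' x = (derivative Q - C (2 * c) * X * Q).eval x * rexp (-c * x ^ 2) :=
    fun x => (hψ' x).unique (by rw [funext hψ]; exact hasDerivAt_eval_mul_exp_neg_mul_sq c Q x)
  set A := C (1 / 2) * derivative (derivative w) - w * V
  refine integral_eq_zero_of_hasDerivAt_of_integrable (f := fun x =>
    A.eval x * (ψ x * ψ x) - (derivative w).eval x * (ψ x * ψ' x) + w.eval x * (ψ' x * ψ' x))
    (fun x => ?_) (integrable_eval_mul_mul_of_eq_eval_mul_exp hc hψ hψ _)
    (((integrable_eval_mul_mul_of_eq_eval_mul_exp hc hψ hψ A).sub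
      (integrable_eval_mul_mul_of_eq_eval_mul_exp hc hψ hψ'_eq _)).add
      (integrable_eval_mul_mul_of_eq_eval_mul_exp hc hψ'_eq hψ'_eq w))
  refine ((((A.hasDerivAt x).mul ((hψ' x).mul (hψ' x))).sub
    (((derivative w).hasDerivAt x).mul ((hψ' x).mul (hψ'' x)))).add
    ((w.hasDerivAt x).mul ((hψ'' x).mul (hψ'' x)))).congr_deriv ?_
  simp only [A, Function.iterate_succ, Function.iterate_zero, Function.comp_apply, id,
    derivative_sub, derivative_mul, derivative_C, eval_sub, eval_mul, eval_add, eval_C, zero_mul,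
    zero_add, eval_ofNat, Pi.mul_apply]
  ring

theorem integral_sq_mul_deriv_deriv_mul_self (hc : 0 < c)
    (hψ : ∀ x, ψ x = Q.eval x * rexp (-c * x ^ 2)) (hψ' : ∀ x, HasDerivAt ψ (ψ' x) x)
    {b E : ℝ} (hb : b ≠ 0) (hψ'' : ∀ x, HasDerivAt ψ' ((b ^ 2 * x ^ 2 - E * b) * ψ x) x) :
    ∫ x, x ^ 2 * deriv (deriv ψ) x * ψ x = (3 - E ^ 2) / 8 * ∫ x, ψ x ^ 2 := by
  set V : ℝ[X] := C (b ^ 2) * X ^ 2 - C (E * b)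
  have hV : ∀ x, V.eval x = b ^ 2 * x ^ 2 - E * b := by simp [V]
  set w : ℝ[X] := X ^ 3 - C (E / (2 * b)) * X
  have hvirial := integral_virial hc hψ hψ' V (by simpa only [hV] using hψ'') w
  have hintegrand : ∀ x, (C (1 / 2) * derivative^[3] w - 2 * derivative w * V
      - w * derivative V).eval x * (ψ x * ψ x)
      = -8 * ((X ^ 2 * V).eval x * (ψ x * ψ x)) + (3 - E ^ 2) * (ψ x * ψ x) := by
    intro x
    simp only [one_div, iterate_map_sub, Function.iterate_succ, Function.iterate_zero_apply,
      Function.comp_apply, derivative_pow, Nat.cast_ofNat, Nat.add_one_sub_one, derivative_X,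
      mul_one, derivative_mul, derivative_C, zero_mul, pow_one, zero_add, iterate_derivative_C_mul,
      Nat.one_lt_ofNat, iterate_derivative_X, mul_zero, sub_zero, derivative_sub, map_pow, map_mul,
      add_zero, eval_sub, eval_mul, eval_C, eval_ofNat, eval_pow, eval_X, neg_mul, w, V]
    field_simp
    ring
  have hψψ := integrable_eval_mul_mul_of_eq_eval_mul_exp hc hψ hψ
  rw [funext hintegrand, integral_add ((hψψ _).const_mul _)
    ((by simpa using hψψ 1 : Integrable fun x => ψ x * ψ x).const_mul _), integral_const_mul,
    integral_const_mul] at hvirial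
  have hderiv : deriv ψ = ψ' := funext fun x => (hψ' x).deriv
  have hlhs : ∫ x, x ^ 2 * deriv (deriv ψ) x * ψ x = ∫ x, (X ^ 2 * V).eval x * (ψ x * ψ x) := by
    congr with x
    rw [hderiv, (hψ'' x).deriv, eval_mul, eval_pow, eval_X, hV]
    ring
  simp_rw [hlhs, sq (ψ _)]
  linarith

end GaussianDecay

/-- Mixed moment identity for Hermite eigenfunctions:
`∫ x² ψ_k'' ψ_k = -((2k²+2k-1)/4) ∫ ψ_k²`. -/
theorem hermite_mixed_moment (b₀ : ℝ) (hb₀ : 0 < b₀) (k : ℕ) (ψ : ℝ → ℝ)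
    (hψ : ∀ x, ψ x =
      Real.exp (b₀ * x ^ 2 / 2) * iteratedDeriv k (fun y => Real.exp (-b₀ * y ^ 2)) x) :
    ∫ x : ℝ, x ^ 2 * deriv (deriv ψ) x * ψ x =
      -((2 * (k : ℝ) ^ 2 + 2 * (k : ℝ) - 1) / 4) * ∫ x : ℝ, ψ x ^ 2 := by
  obtain rfl : ψ = hermiteFunction b₀ k :=
    funext fun x => (hψ x).trans (exp_mul_iteratedDeriv_exp_neg_mul_sq b₀ k x)
  obtain ⟨ψ', hψ', hψ''⟩ := exists_hasDerivAt_hermiteFunction b₀ k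
  rw [integral_sq_mul_deriv_deriv_mul_self (ψ := hermiteFunction b₀ k) (half_pos hb₀)
    (fun x => rfl) hψ' hb₀.ne' hψ'']
  ring
end

section
/- Let b₀ > 0 and k ∈ ℕ, and define ψ_k : ℝ → ℝ by ψ_k(x) = e^{b₀x²/2} · (dᵏ/dxᵏ)(e^{−b₀x²}). Then ∫_{ℝ} ψ_k''(x)² dx = (3(2k²+2k+1)·b₀²/4) · ∫_{ℝ} ψ_k(x)² dx. -/
/-!
The `k`-th derivative of `e^{-b x²}` is `P_k(x) e^{-b x²}` with `P_k = (d/dx − 2bx)^k 1`, a rescaled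
Hermite polynomial, so `ψ_k = P_k e^{-b x²/2}`. Commuting `d/dx` past `d/dx − 2bx` gives
`P_k' = −2bk P_{k−1}` and hence the Hermite equation `P_k'' = 2bx P_k' − 2bk P_k`, which turns
into the oscillator equation `ψ_k'' = (b²x² − (2k+1)b) ψ_k`. Both sides of the claim are then
Gaussian moments of polynomials, and their relation is `∫ (S' − 2bxS) e^{-b x²} = 0` for one
explicit polynomial `S` in `x`, `P_k` and `P_k'`.
-/

open MeasureTheory Polynomial Real

noncomputable def gaussDerivative (a : ℝ) (R : ℝ[X]) : ℝ[X] :=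
  derivative R - 2 * C a * X * R

/-- `gaussPoly a k (x) = (-√a)^k H_k(√a x)`, with `H_k` the physicists' Hermite polynomial. -/
noncomputable def gaussPoly (a : ℝ) (k : ℕ) : ℝ[X] := (gaussDerivative a)^[k] 1

theorem gaussPoly_succ (a : ℝ) (k : ℕ) :
    gaussPoly a (k + 1) = gaussDerivative a (gaussPoly a k) :=
  Function.iterate_succ_apply' _ _ _

theorem hasDerivAt_eval_mul_gaussian (a : ℝ) (R : ℝ[X]) (x : ℝ) :
    HasDerivAt (fun x => eval x R * rexp (-a * x ^ 2))
      (eval x (gaussDerivative a R) * rexp (-a * x ^ 2)) x := by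
  have hexp := ((hasDerivAt_pow 2 x).const_mul (-a)).exp
  refine ((R.hasDerivAt x).mul hexp).congr_deriv ?_
  simp only [gaussDerivative, eval_sub, eval_mul, eval_C, eval_X, eval_ofNat]
  ring

theorem deriv_eval_mul_gaussian (a : ℝ) (R : ℝ[X]) :
    deriv (fun x => eval x R * rexp (-a * x ^ 2)) =
      fun x => eval x (gaussDerivative a R) * rexp (-a * x ^ 2) :=
  funext fun x => (hasDerivAt_eval_mul_gaussian a R x).deriv

theorem integrable_eval_mul_gaussian {a : ℝ} (ha : 0 < a) (R : ℝ[X]) :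
    Integrable (fun x => eval x R * rexp (-a * x ^ 2)) := by
  induction R using Polynomial.induction_on' with
  | add p q hp hq => simpa only [eval_add, add_mul, Pi.add_def] using hp.add hq
  | monomial n c =>
    have hn : (-1 : ℝ) < n := by linarith [n.cast_nonneg (α := ℝ)]
    simpa [mul_assoc, rpow_natCast] using (integrable_rpow_mul_exp_neg_mul_sq ha hn).const_mul c

theorem integral_eval_gaussDerivative_mul_gaussian {a : ℝ} (ha : 0 < a) (R : ℝ[X]) :
    ∫ x, eval x (gaussDerivative a R) * rexp (-a * x ^ 2) = 0 :=
  integral_eq_zero_of_hasDerivAt_of_integrable (hasDerivAt_eval_mul_gaussian a R)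
    (integrable_eval_mul_gaussian ha _) (integrable_eval_mul_gaussian ha R)

theorem iteratedDeriv_gaussian (a : ℝ) (k : ℕ) :
    iteratedDeriv k (fun x => rexp (-a * x ^ 2)) =
      fun x => eval x (gaussPoly a k) * rexp (-a * x ^ 2) := by
  induction k with
  | zero => simp [gaussPoly]
  | succ k ih => rw [iteratedDeriv_succ, ih, deriv_eval_mul_gaussian, gaussPoly_succ]

theorem derivative_gaussDerivative (a : ℝ) (R : ℝ[X]) :
    derivative (gaussDerivative a R) = gaussDerivative a (derivative R) - 2 * C a * R := by
  simp only [gaussDerivative, derivative_sub, derivative_mul, derivative_C, derivative_X,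
    derivative_ofNat]
  ring

theorem derivative_gaussPoly_succ (a : ℝ) (k : ℕ) :
    derivative (gaussPoly a (k + 1)) = C (-2 * a * (k + 1)) * gaussPoly a k := by
  induction k with
  | zero => simp [gaussPoly, gaussDerivative, C_ofNat]
  | succ k ih =>
    rw [gaussPoly_succ, derivative_gaussDerivative, ih, gaussPoly_succ]
    simp only [gaussDerivative, derivative_C_mul]
    simp only [map_mul, map_add, map_neg, map_ofNat, map_natCast, map_one,
      Nat.cast_add, Nat.cast_one]
    ring

theorem derivative_derivative_gaussPoly (a : ℝ) (k : ℕ) :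
    derivative (derivative (gaussPoly a k)) =
      2 * C a * X * derivative (gaussPoly a k) - 2 * C a * C (k : ℝ) * gaussPoly a k := by
  have h := derivative_gaussPoly_succ a k
  rw [gaussPoly_succ, derivative_gaussDerivative, gaussDerivative] at h
  simp only [map_mul, map_add, map_neg, map_ofNat, map_one] at h
  linear_combination h

/-- For `ψ = Q e^{-a x²/2}` this is the oscillator equation `ψ'' = (a²x² − (2κ+1)a) ψ`. -/
theorem gaussDerivative_half_gaussDerivative_half {a κ : ℝ} {Q : ℝ[X]}
    (hQ : derivative (derivative Q) = 2 * C a * X * derivative Q - 2 * C a * C κ * Q) :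
    gaussDerivative (a / 2) (gaussDerivative (a / 2) Q) =
      (C a ^ 2 * X ^ 2 - (2 * C κ + 1) * C a) * Q := by
  have ha : (2 : ℝ[X]) * C (a / 2) = C a := by
    rw [← C_ofNat, ← C_mul]; ring_nf
  simp only [gaussDerivative, ha, derivative_sub, derivative_mul, derivative_C, derivative_X]
  linear_combination hQ

theorem sq_eval_mul_gaussian_half (a : ℝ) (R : ℝ[X]) (x : ℝ) :
    (eval x R * rexp (-(a / 2) * x ^ 2)) ^ 2 = eval x (R ^ 2) * rexp (-a * x ^ 2) := by
  rw [mul_pow, eval_pow, ← exp_nat_mul]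
  ring_nf

/-- Ansatz `Σ_j x^j (α_j Q² + β_j Q Q' + γ_j Q'²)`; the coefficients solve the linear system that
makes `gaussDerivative_momentCertificate` hold modulo the Hermite equation for `Q`. -/
noncomputable def momentCertificate (a κ : ℝ) (Q : ℝ[X]) : ℝ[X] :=
  (-4 * C a ^ 3 * (C κ + 2) * X ^ 3 + 2 * C a ^ 2 * (5 * (2 * C κ + 1) * (C κ + 1) - 3) * X)
      * Q ^ 2
    + (4 * C a ^ 3 * X ^ 4 + 2 * C a ^ 2 * (3 - 5 * (2 * C κ + 1)) * X ^ 2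
        - 5 * (2 * C κ + 1) * C a) * Q * derivative Q
    + (-2 * C a ^ 2 * X ^ 3 + 5 * (2 * C κ + 1) * C a * X) * derivative Q ^ 2

theorem gaussDerivative_momentCertificate {a κ : ℝ} {Q : ℝ[X]}
    (hQ : derivative (derivative Q) = 2 * C a * X * derivative Q - 2 * C a * C κ * Q) :
    gaussDerivative a (momentCertificate a κ Q) =
      16 * ((C a ^ 2 * X ^ 2 - (2 * C κ + 1) * C a) * Q) ^ 2
        - 12 * (2 * C κ ^ 2 + 2 * C κ + 1) * C a ^ 2 * Q ^ 2 := by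
  simp only [gaussDerivative, momentCertificate, derivative_add, derivative_sub, derivative_mul,
    derivative_pow, derivative_X, derivative_C, derivative_ofNat, derivative_neg, derivative_one]
  push_cast
  simp only [map_ofNat]
  linear_combination
    ((4 * C a ^ 3 * X ^ 4 + 2 * C a ^ 2 * (3 - 5 * (2 * C κ + 1)) * X ^ 2
        - 5 * (2 * C κ + 1) * C a) * Q
      + 2 * (-2 * C a ^ 2 * X ^ 3 + 5 * (2 * C κ + 1) * C a * X) * derivative Q) * hQ

theorem integral_sq_oscillator_mul_gaussian {a κ : ℝ} (ha : 0 < a) {Q : ℝ[X]}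
    (hQ : derivative (derivative Q) = 2 * C a * X * derivative Q - 2 * C a * C κ * Q) :
    ∫ x, eval x (((C a ^ 2 * X ^ 2 - (2 * C κ + 1) * C a) * Q) ^ 2) * rexp (-a * x ^ 2) =
      3 * (2 * κ ^ 2 + 2 * κ + 1) * a ^ 2 / 4 * ∫ x, eval x (Q ^ 2) * rexp (-a * x ^ 2) := by
  have h := integral_eval_gaussDerivative_mul_gaussian ha (momentCertificate a κ Q)
  rw [gaussDerivative_momentCertificate hQ] at h
  have hsplit : ∀ A B : ℝ[X], (fun x => eval x (16 * A - 12 * (2 * C κ ^ 2 + 2 * C κ + 1)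
        * C a ^ 2 * B) * rexp (-a * x ^ 2)) =
      fun x => 16 * (eval x A * rexp (-a * x ^ 2))
        - 12 * (2 * κ ^ 2 + 2 * κ + 1) * a ^ 2 * (eval x B * rexp (-a * x ^ 2)) := by
    intro A B
    funext x
    simp only [eval_sub, eval_mul, eval_add, eval_pow, eval_C, eval_ofNat, eval_one]
    ring
  rw [hsplit, integral_sub ((integrable_eval_mul_gaussian ha _).const_mul _)
    ((integrable_eval_mul_gaussian ha _).const_mul _), integral_const_mul,
    integral_const_mul] at h
  linear_combination h / 16

/-- Identity for the second derivative of Hermite eigenfunctions: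
`∫ (ψ_k'')² = (3(2k²+2k+1)b₀²/4) ∫ ψ_k²`. -/
theorem hermite_second_deriv_moment (b₀ : ℝ) (hb₀ : 0 < b₀) (k : ℕ) (ψ : ℝ → ℝ)
    (hψ : ∀ x, ψ x =
      Real.exp (b₀ * x ^ 2 / 2) * iteratedDeriv k (fun y => Real.exp (-b₀ * y ^ 2)) x) :
    ∫ x : ℝ, (deriv (deriv ψ) x) ^ 2 =
      (3 * (2 * (k : ℝ) ^ 2 + 2 * (k : ℝ) + 1) * b₀ ^ 2 / 4) * ∫ x : ℝ, ψ x ^ 2 := by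
  have hode := derivative_derivative_gaussPoly b₀ k
  have hψ_eq : ψ = fun x => eval x (gaussPoly b₀ k) * rexp (-(b₀ / 2) * x ^ 2) := by
    funext x
    rw [hψ, iteratedDeriv_gaussian, mul_left_comm, ← exp_add]
    ring_nf
  have hψ'' : deriv (deriv ψ) = fun x =>
      eval x ((C b₀ ^ 2 * X ^ 2 - (2 * C (k : ℝ) + 1) * C b₀) * gaussPoly b₀ k)
        * rexp (-(b₀ / 2) * x ^ 2) := by
    rw [hψ_eq, deriv_eval_mul_gaussian, deriv_eval_mul_gaussian,
      gaussDerivative_half_gaussDerivative_half hode]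
  rw [hψ'', hψ_eq]
  simp only [sq_eval_mul_gaussian_half]
  exact integral_sq_oscillator_mul_gaussian hb₀ hode
end

section
/- Define G_k(x) = (−1)ᵏ e^{x²} (dᵏ/dxᵏ)(e^{−x²}) for k ∈ ℕ. Then for every k ≥ 1, ∫_{ℝ} x³·G_{k−1}(x)·G_k(x)·e^{−x²} dx = 3k·2^{k−2}·k!·√π. -/
/-!
By Rodrigues' formula `G_k` is the polynomial `H_k` given by `H_0 = 1`, `H_{k+1} = 2X H_k - H_k'`,
because `(H_k e^{-x²})' = -H_{k+1} e^{-x²}`. The same identity lets one integrate by parts `k`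
times: `∫ q H_k e^{-x²} = ∫ q^{(k)} e^{-x²}` for every polynomial `q`. For `q = X³ H_{k-1}` the
derivative `q^{(k)}` is quadratic; its coefficients only involve the leading coefficient
`2^{k-1}` of `H_{k-1}` and its coefficient of `x^{k-3}`, and the Gaussian moments
`∫ e^{-x²} = √π`, `∫ x e^{-x²} = 0`, `∫ x² e^{-x²} = √π / 2` finish the computation.
-/

open MeasureTheory

/-- The `k`-th physicists' Hermite polynomial `G_k(x) = (-1)^k e^{x²} (d^k/dx^k)(e^{-x²})`. -/
noncomputable def hermiteG (k : ℕ) (x : ℝ) : ℝ :=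
  (-1) ^ k * Real.exp (x ^ 2) * iteratedDeriv k (fun y => Real.exp (-y ^ 2)) x

open Polynomial Real

noncomputable def physHermite : ℕ → ℝ[X]
  | 0 => 1
  | n + 1 => C 2 * X * physHermite n - derivative (physHermite n)

@[simp]
lemma physHermite_zero : physHermite 0 = 1 := rfl

lemma physHermite_succ (n : ℕ) :
    physHermite (n + 1) = C 2 * X * physHermite n - derivative (physHermite n) := rfl

@[simp]
lemma physHermite_one : physHermite 1 = C 2 * X := by
  simp [physHermite_succ]

lemma natDegree_physHermite_le (n : ℕ) : (physHermite n).natDegree ≤ n := by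
  induction n with
  | zero => simp
  | succ n ih =>
    rw [physHermite_succ]
    refine (natDegree_sub_le _ _).trans (max_le ?_ ?_)
    · have h2X : (C (2 : ℝ) * X).natDegree ≤ 1 := (natDegree_C_mul_le _ _).trans natDegree_X_le
      exact natDegree_mul_le.trans (by omega)
    · exact (natDegree_derivative_le _).trans (by omega)

lemma coeff_physHermite_of_lt {n m : ℕ} (h : n < m) : (physHermite n).coeff m = 0 :=
  coeff_eq_zero_of_natDegree_lt ((natDegree_physHermite_le n).trans_lt h)

lemma coeff_physHermite_succ_succ (n m : ℕ) :
    (physHermite (n + 1)).coeff (m + 1)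
      = 2 * (physHermite n).coeff m - (physHermite n).coeff (m + 2) * ((m : ℝ) + 2) := by
  rw [physHermite_succ, coeff_sub, coeff_derivative, mul_assoc, coeff_C_mul, coeff_X_mul]
  push_cast
  ring

@[simp]
lemma coeff_physHermite_self (n : ℕ) : (physHermite n).coeff n = 2 ^ n := by
  induction n with
  | zero => simp
  | succ n ih =>
    rw [coeff_physHermite_succ_succ, ih, coeff_physHermite_of_lt (by omega)]
    ring

lemma coeff_physHermite_add_two (n : ℕ) :
    (physHermite (n + 2)).coeff n = -((n : ℝ) + 2) * ((n : ℝ) + 1) * 2 ^ n := by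
  induction n with
  | zero =>
    rw [physHermite_succ, physHermite_one]
    simp [mul_coeff_zero]
  | succ n ih =>
    rw [coeff_physHermite_succ_succ, ih, coeff_physHermite_self]
    push_cast
    ring

lemma hasDerivAt_physHermite_mul_exp (n : ℕ) (x : ℝ) :
    HasDerivAt (fun y => (physHermite n).eval y * exp (-y ^ 2))
      (-((physHermite (n + 1)).eval x * exp (-x ^ 2))) x := by
  have hexp : HasDerivAt (fun y : ℝ => exp (-y ^ 2)) (exp (-x ^ 2) * -(↑2 * x ^ 1)) x :=
    ((hasDerivAt_pow 2 x).neg).exp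
  refine (((physHermite n).hasDerivAt x).mul hexp).congr_deriv ?_
  simp only [physHermite_succ, eval_sub, eval_mul, eval_C, eval_X]
  ring

lemma iteratedDeriv_exp_neg_sq (n : ℕ) (x : ℝ) :
    iteratedDeriv n (fun y => exp (-y ^ 2)) x
      = (-1) ^ n * ((physHermite n).eval x * exp (-x ^ 2)) := by
  induction n generalizing x with
  | zero => simp
  | succ n ih =>
    rw [iteratedDeriv_succ, funext ih,
      ((hasDerivAt_physHermite_mul_exp n x).const_mul ((-1 : ℝ) ^ n)).deriv, pow_succ]
    ring

lemma hermiteG_eq_eval_physHermite (n : ℕ) (x : ℝ) : hermiteG n x = (physHermite n).eval x := by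
  have hsign : ((-1 : ℝ) ^ n) * (-1) ^ n = 1 := by
    rw [← mul_pow]; norm_num
  have hexp : exp (x ^ 2) * exp (-x ^ 2) = 1 := by
    rw [← exp_add]; simp
  rw [hermiteG, iteratedDeriv_exp_neg_sq]
  linear_combination (physHermite n).eval x * (exp (x ^ 2) * exp (-x ^ 2) * hsign + hexp)

lemma integrable_pow_mul_exp_neg_sq (n : ℕ) : Integrable (fun x : ℝ => x ^ n * exp (-x ^ 2)) := by
  refine (integrable_rpow_mul_exp_neg_mul_sq one_pos
    (neg_one_lt_zero.trans_le (Nat.cast_nonneg n))).congr (.of_forall fun x => ?_)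
  simp

lemma integrable_eval_mul_exp_neg_sq (p : ℝ[X]) :
    Integrable (fun x => p.eval x * exp (-x ^ 2)) := by
  induction p using Polynomial.induction_on' with
  | add p q hp hq => exact (hp.add hq).congr (.of_forall fun x => by simp [add_mul])
  | monomial n a => simpa [mul_assoc] using (integrable_pow_mul_exp_neg_sq n).const_mul a

lemma integrable_eval_mul_eval_mul_exp_neg_sq (p q : ℝ[X]) :
    Integrable (fun x => p.eval x * (q.eval x * exp (-x ^ 2))) := by
  simpa [mul_assoc] using integrable_eval_mul_exp_neg_sq (p * q)

lemma integral_eval_mul_physHermite_succ (q : ℝ[X]) (n : ℕ) :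
    ∫ x, q.eval x * ((physHermite (n + 1)).eval x * exp (-x ^ 2))
      = ∫ x, (derivative q).eval x * ((physHermite n).eval x * exp (-x ^ 2)) := by
  have h := integral_mul_deriv_eq_deriv_mul_of_integrable
    (fun x _ => q.hasDerivAt x) (fun x _ => hasDerivAt_physHermite_mul_exp n x)
    ((integrable_eval_mul_eval_mul_exp_neg_sq q (physHermite (n + 1))).neg.congr
      (.of_forall fun x => by simp))
    (integrable_eval_mul_eval_mul_exp_neg_sq (derivative q) (physHermite n))
    (integrable_eval_mul_eval_mul_exp_neg_sq q (physHermite n))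
  simpa [integral_neg] using h

lemma integral_eval_mul_physHermite (n : ℕ) (q : ℝ[X]) :
    ∫ x, q.eval x * ((physHermite n).eval x * exp (-x ^ 2))
      = ∫ x, (derivative^[n] q).eval x * exp (-x ^ 2) := by
  induction n generalizing q with
  | zero => simp
  | succ n ih =>
    rw [integral_eval_mul_physHermite_succ, ih, Function.iterate_succ_apply]

lemma integral_exp_neg_sq : ∫ x : ℝ, exp (-x ^ 2) = √π := by
  simpa using integral_gaussian 1

-- Both moments are integrations by parts against `H_1 = 2X`.
lemma integral_mul_exp_neg_sq : ∫ x : ℝ, x * exp (-x ^ 2) = 0 := by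
  have h := integral_eval_mul_physHermite 1 (C (1 / 2))
  simp only [physHermite_one, eval_C, eval_mul, eval_X, Function.iterate_one, derivative_C,
    eval_zero, zero_mul, integral_zero] at h
  rw [← h]
  congr 1 with x
  ring

lemma integral_sq_mul_exp_neg_sq : ∫ x : ℝ, x ^ 2 * exp (-x ^ 2) = √π / 2 := by
  have h := integral_eval_mul_physHermite 1 (C (1 / 2) * X)
  simp only [physHermite_one, eval_C, eval_mul, eval_X, Function.iterate_one, derivative_C_mul_X,
    integral_const_mul, integral_exp_neg_sq] at h
  calc ∫ x : ℝ, x ^ 2 * exp (-x ^ 2) = ∫ x : ℝ, 1 / 2 * x * (2 * x * exp (-x ^ 2)) := by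
        congr 1 with x; ring
    _ = √π / 2 := by rw [h]; ring

lemma integral_eval_mul_exp_neg_sq_of_natDegree_le_two {p : ℝ[X]} (hp : p.natDegree ≤ 2) :
    ∫ x, p.eval x * exp (-x ^ 2) = (p.coeff 0 + p.coeff 2 / 2) * √π := by
  have hsum (x : ℝ) : p.eval x * exp (-x ^ 2)
      = ∑ i ∈ Finset.range 3, p.coeff i * (x ^ i * exp (-x ^ 2)) := by
    rw [eval_eq_sum_range' (by omega : p.natDegree < 3), Finset.sum_mul]
    exact Finset.sum_congr rfl fun i _ => by ring
  simp_rw [hsum]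
  rw [integral_finsetSum _ fun i _ => (integrable_pow_mul_exp_neg_sq i).const_mul _]
  simp only [integral_const_mul, Finset.sum_range_succ, Finset.sum_range_zero, pow_zero, one_mul,
    pow_one, integral_exp_neg_sq, integral_mul_exp_neg_sq, integral_sq_mul_exp_neg_sq]
  ring

lemma coeff_X_pow_three_mul_physHermite (m : ℕ) :
    (X ^ 3 * physHermite m).coeff (m + 1) = -(m : ℝ) * ((m : ℝ) - 1) * 2 ^ m / 4 := by
  rcases Nat.lt_or_ge m 2 with hm | hm
  · interval_cases m
    · simp [coeff_X_pow]
    · rw [physHermite_one, show (X : ℝ[X]) ^ 3 * (C 2 * X) = C 2 * X ^ 4 by ring]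
      simp [coeff_X_pow]
  · obtain ⟨j, rfl⟩ := Nat.exists_eq_add_of_le' hm
    rw [show j + 2 + 1 = j + 3 from rfl, coeff_X_pow_mul, coeff_physHermite_add_two]
    push_cast
    ring

lemma two_mul_descFactorial (m : ℕ) :
    2 * (m + 3).descFactorial (m + 1) = (m + 3) * (m + 2) * (m + 1).factorial := by
  have h := Nat.factorial_mul_descFactorial (show m + 1 ≤ m + 3 by omega)
  rw [show m + 3 - (m + 1) = 2 by omega] at h
  simp only [Nat.factorial_succ (m + 2), Nat.factorial_succ (m + 1)] at h
  simpa [Nat.factorial, mul_assoc] using h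

lemma integral_pow_three_mul_physHermite_mul_physHermite_succ (m : ℕ) :
    ∫ x, x ^ 3 * (physHermite m).eval x * (physHermite (m + 1)).eval x * exp (-x ^ 2)
      = 3 * ((m : ℝ) + 1) * 2 ^ m * (m + 1).factorial * √π / 2 := by
  set q : ℝ[X] := X ^ 3 * physHermite m
  have hq : q.natDegree ≤ m + 3 :=
    natDegree_mul_le.trans (by linarith [natDegree_X_pow_le (R := ℝ) 3, natDegree_physHermite_le m])
  have hdeg : (derivative^[m + 1] q).natDegree ≤ 2 :=
    (natDegree_iterate_derivative q (m + 1)).trans (by omega)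
  have hdesc : ((m + 3).descFactorial (m + 1) : ℝ) = (m + 3) * (m + 2) * (m + 1).factorial / 2 := by
    rw [eq_div_iff two_ne_zero, mul_comm]
    exact_mod_cast two_mul_descFactorial m
  calc ∫ x, x ^ 3 * (physHermite m).eval x * (physHermite (m + 1)).eval x * exp (-x ^ 2)
      = ∫ x, q.eval x * ((physHermite (m + 1)).eval x * exp (-x ^ 2)) := by
        congr 1 with x; simp only [eval_mul, eval_pow, eval_X, q]; ring
    _ = ∫ x, (derivative^[m + 1] q).eval x * exp (-x ^ 2) := integral_eval_mul_physHermite _ _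
    _ = ((m + 1).factorial * q.coeff (m + 1)
          + (m + 3).descFactorial (m + 1) * q.coeff (m + 3) / 2) * √π := by
        rw [integral_eval_mul_exp_neg_sq_of_natDegree_le_two hdeg, coeff_iterate_derivative,
          coeff_iterate_derivative, zero_add, Nat.descFactorial_self, nsmul_eq_mul, nsmul_eq_mul,
          show 2 + (m + 1) = m + 3 by omega]
    _ = 3 * ((m : ℝ) + 1) * 2 ^ m * (m + 1).factorial * √π / 2 := by
        rw [coeff_X_pow_three_mul_physHermite, coeff_X_pow_mul, coeff_physHermite_self, hdesc]
        ring

/-- Cross-moment identity: `∫ x³ G_{k-1} G_k e^{-x²} = 3k·2^{k-2} k! √π` for `k ≥ 1`. -/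
theorem hermite_cubic_cross_moment (k : ℕ) (hk : 1 ≤ k) :
    ∫ x : ℝ, x ^ 3 * hermiteG (k - 1) x * hermiteG k x * Real.exp (-x ^ 2)
      = 3 * (k : ℝ) * (2 : ℝ) ^ ((k : ℤ) - 2) * (Nat.factorial k : ℝ)
          * Real.sqrt Real.pi := by
  obtain ⟨m, rfl⟩ : ∃ m, k = m + 1 := ⟨k - 1, by omega⟩
  have hpow : (2 : ℝ) ^ (((m + 1 : ℕ) : ℤ) - 2) = 2 ^ m / 2 := by
    rw [show ((m + 1 : ℕ) : ℤ) - 2 = m - 1 by omega,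
      zpow_sub₀ two_ne_zero, zpow_natCast, zpow_one]
  simp only [hermiteG_eq_eval_physHermite, Nat.add_sub_cancel,
    integral_pow_three_mul_physHermite_mul_physHermite_succ, hpow]
  push_cast
  ring
end
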